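/- arXiv:1308.3530 — 2 statements merged into one kernel-verified Lean document; each statement's English description precedes it below -/
import Mathlib

section
/- Let G be a finite simple graph on [d] whose complement has nonempty connected components H_1, ..., H_m (ignoring isolated vertices). Then ε(K_d) − ε(G) = Σ_{j=1}^m (ε(K_d) − ε(K_d − H_j)), where K_d − H_j denotes K_d with the edges of H_j removed. -/
open Finset SimpleGraph

/-- A 4-cycle exists within the vertex set `s` of the graph `G`. -/
def fourCycleOn {V : Type*} (G : SimpleGraph V) (s : Set V) : Prop :=
  ∃ a b c d, a ∈ s ∧ b ∈ s ∧ c ∈ s ∧ d ∈ s ∧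
    a ≠ b ∧ a ≠ c ∧ a ≠ d ∧ b ≠ c ∧ b ≠ d ∧ c ≠ d ∧
    G.Adj a b ∧ G.Adj b c ∧ G.Adj c d ∧ G.Adj d a

/-- The pair of edges `{e,f}` spans an edge of the edge polytope: they share a
vertex, or they are disjoint and the induced subgraph on their endpoints has no 4-cycle. -/
def epPair {V : Type*} (G : SimpleGraph V) (e f : Sym2 V) : Prop :=
  (∃ v, v ∈ e ∧ v ∈ f) ∨
  ((¬ ∃ v, v ∈ e ∧ v ∈ f) ∧ ¬ fourCycleOn G {v | v ∈ e ∨ v ∈ f})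

open scoped Classical in
/-- The number of edges (1-dimensional faces) of the edge polytope of `G`:
the number of unordered pairs of distinct edges satisfying `epPair`. -/
noncomputable def epsilon {V : Type*} [Fintype V] (G : SimpleGraph V) : ℕ :=
  ((G.edgeFinset.powersetCard 2).filter
    (fun s => ∀ e ∈ s, ∀ f ∈ s, e ≠ f → epPair G e f)).card

open scoped Classical in
/-- number of 4-subsets inducing a path of length 3. -/
noncomputable def aCount {V : Type*} [Fintype V] (H : SimpleGraph V) : ℕ :=
  ((univ.powersetCard 4).filter (fun s => ∃ a b c d : V,
    s = {a, b, c, d} ∧ a ≠ b ∧ a ≠ c ∧ a ≠ d ∧ b ≠ c ∧ b ≠ d ∧ c ≠ d ∧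
    H.Adj a b ∧ H.Adj b c ∧ H.Adj c d ∧ ¬H.Adj a c ∧ ¬H.Adj a d ∧ ¬H.Adj b d)).card

open scoped Classical in
/-- number of 4-subsets inducing a cycle of length 4. -/
noncomputable def bCount {V : Type*} [Fintype V] (H : SimpleGraph V) : ℕ :=
  ((univ.powersetCard 4).filter (fun s => ∃ a b c d : V,
    s = {a, b, c, d} ∧ a ≠ b ∧ a ≠ c ∧ a ≠ d ∧ b ≠ c ∧ b ≠ d ∧ c ≠ d ∧
    H.Adj a b ∧ H.Adj b c ∧ H.Adj c d ∧ H.Adj d a ∧ ¬H.Adj a c ∧ ¬H.Adj b d)).card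

open scoped Classical in
/-- number of 4-subsets inducing a path of length 2 plus an isolated vertex. -/
noncomputable def cCount {V : Type*} [Fintype V] (H : SimpleGraph V) : ℕ :=
  ((univ.powersetCard 4).filter (fun s => ∃ a b c d : V,
    s = {a, b, c, d} ∧ a ≠ b ∧ a ≠ c ∧ a ≠ d ∧ b ≠ c ∧ b ≠ d ∧ c ≠ d ∧
    H.Adj a b ∧ H.Adj b c ∧ ¬H.Adj a c ∧ ¬H.Adj a d ∧ ¬H.Adj b d ∧ ¬H.Adj c d)).card

open scoped Classical in
/-- the number of triangles of `H`. -/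
noncomputable def k3 {V : Type*} [Fintype V] (H : SimpleGraph V) : ℕ :=
  ((univ.powersetCard 3).filter (fun s => ∀ i ∈ s, ∀ j ∈ s, i ≠ j → H.Adj i j)).card

open scoped Classical in
/-- the number of 3-subsets inducing a path with exactly two edges. -/
noncomputable def psi {V : Type*} [Fintype V] (H : SimpleGraph V) : ℕ :=
  ((univ.powersetCard 3).filter (fun s => ∃ a b c : V,
    s = {a, b, c} ∧ a ≠ b ∧ a ≠ c ∧ b ≠ c ∧ H.Adj a b ∧ H.Adj b c ∧ ¬H.Adj a c)).card

/-- the complete bipartite graph `K_{m,n}` on the vertex set `[d]`, with parts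
`{0,…,m-1}` and `{m,…,m+n-1}`. -/
def bip (d m n : ℕ) : SimpleGraph (Fin d) where
  Adj i j := ((i : ℕ) < m ∧ m ≤ (j : ℕ) ∧ (j : ℕ) < m + n) ∨
    ((j : ℕ) < m ∧ m ≤ (i : ℕ) ∧ (i : ℕ) < m + n)
  symm := ⟨by intro i j h; tauto⟩
  loopless := ⟨by intro i h; omega⟩

/-- the copy of `H` on the first `r` vertices of `[d]`. -/
def embedGraph {r : ℕ} (H : SimpleGraph (Fin r)) (d : ℕ) : SimpleGraph (Fin d) where
  Adj i j := ∃ (hi : (i : ℕ) < r) (hj : (j : ℕ) < r), H.Adj ⟨i, hi⟩ ⟨j, hj⟩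
  symm := ⟨by rintro i j ⟨hi, hj, h⟩; exact ⟨hj, hi, h.symm⟩⟩
  loopless := ⟨by rintro i ⟨hi, hj, h⟩; exact H.irrefl h⟩

/-- the subgraph of `H` consisting of the edges in the connected component `c`. -/
def compGraph {V : Type*} (H : SimpleGraph V) (c : H.ConnectedComponent) :
    SimpleGraph V where
  Adj i j := H.Adj i j ∧ H.connectedComponentMk i = c
  symm := ⟨by
    rintro i j ⟨h, hc⟩
    exact ⟨h.symm, (SimpleGraph.ConnectedComponent.sound h.symm.reachable).trans hc⟩⟩
  loopless := ⟨by rintro i ⟨h, _⟩; exact H.irrefl h⟩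

open scoped Classical in
/-- `|X_{i,j}|`: the number of vertices (other than `i, j`) adjacent to `i` but not `j`. -/
noncomputable def cardX {V : Type*} [Fintype V] (H : SimpleGraph V) (i j : V) : ℕ :=
  (univ.filter (fun ℓ => ℓ ≠ i ∧ ℓ ≠ j ∧ H.Adj i ℓ ∧ ¬ H.Adj j ℓ)).card


/-!
Write `ε(K_d) - ε(K_d \ H)` as a sum, over the pairs `p` of edges of `K_d`, of the defect
`[p counted in K_d] - [p counted in K_d \ H]`. Whether `p` is counted depends only on the
adjacencies of `H` among the (at most four) endpoints of `p`. If the edges of `H` among these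
endpoints all lie in one component `H_j`, the defect of `p` for `H` equals the one for `H_j`,
and the defects for the other components vanish. Otherwise the endpoints are those of two
edges `ab`, `a'b'` of `H` in different components; then `a a' b b'` is a 4-cycle of
`K_d \ H`, so `p` is counted neither in `K_d` nor in any `K_d \ H'` with `H' ≤ H`, and all
defects of `p` vanish. Summing over `p` and taking `H = Gᶜ` gives the identity.
-/

namespace EdgePolytope

variable {V : Type*}

def edgeSupport (p : Finset (Sym2 V)) : Set V := {v | ∃ e ∈ p, v ∈ e}

def IsPolytopeEdge (G : SimpleGraph V) (p : Finset (Sym2 V)) : Prop :=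
  (p : Set (Sym2 V)) ⊆ G.edgeSet ∧ ∀ e ∈ p, ∀ f ∈ p, e ≠ f → epPair G e f

open scoped Classical in
noncomputable def epDefect (H : SimpleGraph V) (p : Finset (Sym2 V)) : ℤ :=
  (if IsPolytopeEdge ⊤ p then 1 else 0) - (if IsPolytopeEdge (⊤ \ H) p then 1 else 0)

lemma fourCycleOn_mono {G G' : SimpleGraph V} {s : Set V}
    (h : ∀ a ∈ s, ∀ b ∈ s, G.Adj a b → G'.Adj a b) : fourCycleOn G s → fourCycleOn G' s := by
  rintro ⟨a, b, c, d, ha, hb, hc, hd, hab, hac, had, hbc, hbd, hcd, h1, h2, h3, h4⟩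
  exact ⟨a, b, c, d, ha, hb, hc, hd, hab, hac, had, hbc, hbd, hcd,
    h a ha b hb h1, h b hb c hc h2, h c hc d hd h3, h d hd a ha h4⟩

lemma not_share_of_fourCycleOn {G : SimpleGraph V} {e f : Sym2 V}
    (h : fourCycleOn G {v | v ∈ e ∨ v ∈ f}) : ¬∃ v, v ∈ e ∧ v ∈ f := by
  classical
  rintro ⟨v, hve, hvf⟩
  obtain ⟨x, rfl⟩ := Sym2.mem_iff_exists.1 hve
  obtain ⟨y, rfl⟩ := Sym2.mem_iff_exists.1 hvf
  obtain ⟨a, b, c, d, ha, hb, hc, hd, hab, hac, had, hbc, hbd, hcd, -⟩ := h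
  have hmem : ∀ u, u ∈ s(v, x) ∨ u ∈ s(v, y) → u ∈ ({v, x, y} : Finset V) := by
    simp only [Sym2.mem_iff, mem_insert, mem_singleton]; tauto
  have hsub : ({a, b, c, d} : Finset V) ⊆ {v, x, y} := by
    intro u hu
    simp only [mem_insert, mem_singleton] at hu
    rcases hu with rfl | rfl | rfl | rfl <;> exact hmem _ ‹_›
  have hcard : #({a, b, c, d} : Finset V) = 4 := by
    simp [card_insert_of_notMem, *]
  have := card_le_card hsub
  have := card_le_three (a := v) (b := x) (c := y)
  omega

lemma not_epPair_of_fourCycleOn {G : SimpleGraph V} {e f : Sym2 V}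
    (h : fourCycleOn G {v | v ∈ e ∨ v ∈ f}) : ¬epPair G e f :=
  fun hef => hef.elim (not_share_of_fourCycleOn h) fun hdisj => hdisj.2 h

lemma not_isPolytopeEdge_of_fourCycleOn {G : SimpleGraph V} {p : Finset (Sym2 V)}
    (hp : #p = 2) (h : fourCycleOn G (edgeSupport p)) : ¬IsPolytopeEdge G p := by
  classical
  obtain ⟨e, f, hef, rfl⟩ := card_eq_two.1 hp
  have hsupp : edgeSupport {e, f} = {v | v ∈ e ∨ v ∈ f} := by ext; simp [edgeSupport]
  rw [hsupp] at h
  exact fun hG => not_epPair_of_fourCycleOn h (hG.2 e (by simp) f (by simp) hef)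

lemma isPolytopeEdge_congr {G G' : SimpleGraph V} {p : Finset (Sym2 V)}
    (h : ∀ a ∈ edgeSupport p, ∀ b ∈ edgeSupport p, G.Adj a b ↔ G'.Adj a b) :
    IsPolytopeEdge G p ↔ IsPolytopeEdge G' p := by
  have hedge : ∀ e ∈ p, e ∈ G.edgeSet ↔ e ∈ G'.edgeSet := by
    intro e he
    induction e using Sym2.ind with
    | _ a b => exact h a ⟨_, he, by simp⟩ b ⟨_, he, by simp⟩
  have hcycle : ∀ e ∈ p, ∀ f ∈ p,
      fourCycleOn G {v | v ∈ e ∨ v ∈ f} ↔ fourCycleOn G' {v | v ∈ e ∨ v ∈ f} := by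
    intro e he f hf
    have hsupp : ∀ v ∈ {v | v ∈ e ∨ v ∈ f}, v ∈ edgeSupport p := by
      rintro v (hv | hv)
      exacts [⟨e, he, hv⟩, ⟨f, hf, hv⟩]
    exact ⟨fourCycleOn_mono fun a ha b hb => (h a (hsupp a ha) b (hsupp b hb)).1,
      fourCycleOn_mono fun a ha b hb => (h a (hsupp a ha) b (hsupp b hb)).2⟩
  refine and_congr ⟨fun hG e he => (hedge e he).1 (hG he), fun hG e he => (hedge e he).2 (hG he)⟩
    (forall₂_congr fun e he => forall₂_congr fun f hf => imp_congr_right fun _ =>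
      or_congr_right (and_congr_right' (not_congr (hcycle e he f hf))))

lemma epDefect_congr {H H' : SimpleGraph V} {p : Finset (Sym2 V)}
    (h : ∀ a ∈ edgeSupport p, ∀ b ∈ edgeSupport p, H.Adj a b ↔ H'.Adj a b) :
    epDefect H p = epDefect H' p := by
  rw [epDefect, epDefect, isPolytopeEdge_congr (G := ⊤ \ H) (G' := ⊤ \ H')]
  intro a ha b hb
  simp only [sdiff_adj, h a ha b hb]

lemma epDefect_eq_zero_of_forall_not_adj {H : SimpleGraph V} {p : Finset (Sym2 V)}
    (h : ∀ a ∈ edgeSupport p, ∀ b ∈ edgeSupport p, ¬H.Adj a b) : epDefect H p = 0 := by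
  rw [epDefect_congr (H' := ⊥) fun a ha b hb => iff_of_false (h a ha b hb) id, epDefect,
    sdiff_bot, sub_self]

lemma epDefect_eq_zero_of_fourCycleOn {H H' : SimpleGraph V} {p : Finset (Sym2 V)}
    (hp : #p = 2) (h : fourCycleOn (⊤ \ H) (edgeSupport p)) (hH' : H' ≤ H) :
    epDefect H' p = 0 := by
  have hle : ∀ {G : SimpleGraph V}, ⊤ \ H ≤ G → ¬IsPolytopeEdge G p := fun hG =>
    not_isPolytopeEdge_of_fourCycleOn hp (fourCycleOn_mono (fun _ _ _ _ hab => hG hab) h)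
  rw [epDefect, if_neg (hle le_top), if_neg (hle (sdiff_le_sdiff_left hH')), sub_self]

lemma fourCycleOn_top_sdiff {H : SimpleGraph V} {s : Set V} {a b a' b' : V}
    (hab : H.Adj a b) (hab' : H.Adj a' b')
    (hne : H.connectedComponentMk a ≠ H.connectedComponentMk a')
    (ha : a ∈ s) (hb : b ∈ s) (ha' : a' ∈ s) (hb' : b' ∈ s) : fourCycleOn (⊤ \ H) s := by
  have hadj : ∀ {u v}, H.connectedComponentMk u ≠ H.connectedComponentMk v → (⊤ \ H).Adj u v :=
    fun huv => ⟨fun h => huv (congrArg _ h), fun h => huv (ConnectedComponent.sound h.reachable)⟩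
  have hb_mk : H.connectedComponentMk b = H.connectedComponentMk a :=
    (ConnectedComponent.sound hab.reachable).symm
  have hb'_mk : H.connectedComponentMk b' = H.connectedComponentMk a' :=
    (ConnectedComponent.sound hab'.reachable).symm
  have h1 : (⊤ \ H).Adj a a' := hadj hne
  have h2 : (⊤ \ H).Adj a' b := hadj (hb_mk ▸ hne.symm)
  have h3 : (⊤ \ H).Adj b b' := hadj (hb_mk ▸ hb'_mk ▸ hne)
  have h4 : (⊤ \ H).Adj b' a := hadj (hb'_mk ▸ hne.symm)
  exact ⟨a, a', b, b', ha, ha', hb, hb', h1.ne, hab.ne, h4.ne.symm, h2.ne, hab'.ne, h3.ne,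
    h1, h2, h3, h4⟩

lemma compGraph_le (H : SimpleGraph V) (c : H.ConnectedComponent) : compGraph H c ≤ H :=
  fun _ _ h => h.1

lemma epDefect_eq_sum_compGraph (H : SimpleGraph V) [Fintype H.ConnectedComponent]
    {p : Finset (Sym2 V)} (hp : #p = 2) :
    epDefect H p = ∑ c, epDefect (compGraph H c) p := by
  by_cases hone : ∃ c, ∀ a ∈ edgeSupport p, ∀ b ∈ edgeSupport p,
      H.Adj a b → H.connectedComponentMk a = c
  · obtain ⟨c, hc⟩ := hone
    rw [Fintype.sum_eq_single c fun c' hc' => epDefect_eq_zero_of_forall_not_adj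
      fun a ha b hb (hab : (compGraph H c').Adj a b) =>
        hc' (hab.2.symm.trans (hc a ha b hb hab.1))]
    exact epDefect_congr fun a ha b hb => ⟨fun hab => ⟨hab, hc a ha b hb hab⟩, And.left⟩
  · push Not at hone
    obtain ⟨e, -⟩ := card_pos.1 (by omega : 0 < #p)
    obtain ⟨a, ha, b, hb, hab, -⟩ := hone (H.connectedComponentMk e.out.1)
    obtain ⟨a', ha', b', hb', hab', hne⟩ := hone (H.connectedComponentMk a)
    have hcycle := fourCycleOn_top_sdiff hab hab' hne.symm ha hb ha' hb'
    rw [epDefect_eq_zero_of_fourCycleOn hp hcycle le_rfl]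
    exact (sum_eq_zero fun c _ =>
      epDefect_eq_zero_of_fourCycleOn hp hcycle (compGraph_le H c)).symm

variable [Fintype V]

open scoped Classical

lemma epsilon_eq_card_filter (G : SimpleGraph V) :
    epsilon G = #{p ∈ (⊤ : SimpleGraph V).edgeFinset.powersetCard 2 | IsPolytopeEdge G p} := by
  refine congrArg card (ext fun p => ?_)
  simp only [mem_filter, mem_powersetCard, ← coe_subset, coe_edgeFinset]
  unfold IsPolytopeEdge
  exact ⟨fun ⟨⟨hG, h2⟩, hpair⟩ => ⟨⟨hG.trans (edgeSet_mono le_top), h2⟩, hG, hpair⟩,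
    fun ⟨⟨_, h2⟩, hG, hpair⟩ => ⟨⟨hG, h2⟩, hpair⟩⟩

lemma epsilon_top_sub_epsilon_sdiff (H : SimpleGraph V) :
    (epsilon (⊤ : SimpleGraph V) : ℤ) - epsilon (⊤ \ H) =
      ∑ p ∈ (⊤ : SimpleGraph V).edgeFinset.powersetCard 2, epDefect H p := by
  simp only [epsilon_eq_card_filter, natCast_card_filter, epDefect, sum_sub_distrib]

end EdgePolytope

open EdgePolytope

open scoped Classical in
theorem epsilon_complement_components (d : ℕ) (G : SimpleGraph (Fin d)) :
    (epsilon (⊤ : SimpleGraph (Fin d)) : ℤ) - (epsilon G : ℤ) =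
      ∑ c ∈ Finset.univ.filter
          (fun c : (Gᶜ).ConnectedComponent => ∃ i j, (compGraph Gᶜ c).Adj i j),
        ((epsilon (⊤ : SimpleGraph (Fin d)) : ℤ)
          - (epsilon ((⊤ : SimpleGraph (Fin d)) \ compGraph Gᶜ c) : ℤ)) := by
  have hG := epsilon_top_sub_epsilon_sdiff Gᶜ
  rw [top_sdiff, compl_compl] at hG
  rw [sum_filter_of_ne fun c _ hc => ?_]
  · rw [hG, sum_congr rfl fun p hp => epDefect_eq_sum_compGraph Gᶜ (mem_powersetCard.1 hp).2,
      sum_comm]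
    simp only [epsilon_top_sub_epsilon_sdiff]
  · by_contra hno
    push Not at hno
    have hbot : compGraph Gᶜ c = ⊥ := by ext i j; exact iff_of_false (hno i j) id
    rw [hbot, sdiff_bot, sub_self] at hc
    exact hc rfl
end

section
/- For real numbers x, y, z ≥ 0 with x + y + z = d − 2 − k (where d ≥ 2 and 0 ≤ k ≤ d−2), the quantity (x+y)/2 + xy/4 + yz/2 + zx/2 is at most (1/7)(d − 1 − k)², with the bound attained when x = y and x + y = (4/7)(d − 1 − k). -/
open Finset SimpleGraph

/-! Writing `m = d - 1 - k` and `s = x + y`, the constraint gives `z = m - 1 - s`, which turns the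
objective into `m s / 2 - s² / 2 + x y / 4`. AM-GM, `x y ≤ s² / 4`, leaves the concave quadratic
`m s / 2 - 7 s² / 16`, whose maximum `m² / 7` is attained at `s = 4 m / 7`. -/

noncomputable def edgeObjective (x y z : ℝ) : ℝ :=
  (x + y) / 2 + x * y / 4 + y * z / 2 + z * x / 2

lemma edgeObjective_eq_of_add_eq {x y z m : ℝ} (h : x + y + z = m - 1) :
    edgeObjective x y z = m * (x + y) / 2 - (x + y) ^ 2 / 2 + x * y / 4 := by
  obtain rfl : z = m - 1 - (x + y) := by linarith
  unfold edgeObjective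
  ring

lemma quadratic_le_max (m s : ℝ) : m * s / 2 - 7 * s ^ 2 / 16 ≤ 1 / 7 * m ^ 2 := by
  have gap : 1 / 7 * m ^ 2 - (m * s / 2 - 7 * s ^ 2 / 16) = 7 / 16 * (s - 4 / 7 * m) ^ 2 := by
    ring
  have : 0 ≤ 7 / 16 * (s - 4 / 7 * m) ^ 2 := by positivity
  linarith

lemma edgeObjective_le {x y z m : ℝ} (h : x + y + z = m - 1) :
    edgeObjective x y z ≤ 1 / 7 * m ^ 2 := calc
  edgeObjective x y z = m * (x + y) / 2 - (x + y) ^ 2 / 2 + x * y / 4 :=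
    edgeObjective_eq_of_add_eq h
  _ ≤ m * (x + y) / 2 - (x + y) ^ 2 / 2 + (x + y) ^ 2 / 16 := by
    linarith [four_mul_le_sq_add x y]
  _ = m * (x + y) / 2 - 7 * (x + y) ^ 2 / 16 := by ring
  _ ≤ 1 / 7 * m ^ 2 := quadratic_le_max m (x + y)

lemma edgeObjective_self_eq {x z m : ℝ} (h : x + x + z = m - 1) (hs : x + x = 4 / 7 * m) :
    edgeObjective x x z = 1 / 7 * m ^ 2 := by
  rw [edgeObjective_eq_of_add_eq h, hs]
  obtain rfl : x = 2 / 7 * m := by linarith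
  ring

theorem optimization_inequality_general (d k : ℝ) :
    (∀ x y z : ℝ, 0 ≤ x → 0 ≤ y → 0 ≤ z → x + y + z = d - 2 - k →
      (x + y) / 2 + x * y / 4 + y * z / 2 + z * x / 2 ≤ (1 / 7) * (d - 1 - k) ^ 2)
    ∧ (∀ x y z : ℝ, 0 ≤ x → 0 ≤ y → 0 ≤ z → x + y + z = d - 2 - k →
        x = y → x + y = (4 / 7) * (d - 1 - k) →
      (x + y) / 2 + x * y / 4 + y * z / 2 + z * x / 2 = (1 / 7) * (d - 1 - k) ^ 2) := by
  have hm {x y z : ℝ} (h : x + y + z = d - 2 - k) : x + y + z = (d - 1 - k) - 1 := by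
    rw [h]; ring
  refine ⟨fun x y z _ _ _ hsum => ?_, fun x y z _ _ _ hsum hxy hs => ?_⟩
  · exact edgeObjective_le (hm hsum)
  · subst hxy
    exact edgeObjective_self_eq (hm hsum) hs

theorem optimization_inequality (d k : ℝ) (hd : 2 ≤ d) (hk0 : 0 ≤ k)
    (hk : k ≤ d - 2) :
    (∀ x y z : ℝ, 0 ≤ x → 0 ≤ y → 0 ≤ z → x + y + z = d - 2 - k →
      (x + y) / 2 + x * y / 4 + y * z / 2 + z * x / 2 ≤ (1 / 7) * (d - 1 - k) ^ 2)
    ∧ (∀ x y z : ℝ, 0 ≤ x → 0 ≤ y → 0 ≤ z → x + y + z = d - 2 - k →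
        x = y → x + y = (4 / 7) * (d - 1 - k) →
      (x + y) / 2 + x * y / 4 + y * z / 2 + z * x / 2 = (1 / 7) * (d - 1 - k) ^ 2) :=
  optimization_inequality_general d k
end
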